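/- For any indexed forest F and any local binary search labeling ρ ∈ LBS(F), the flagged generating polynomial β(F,ρ) — defined like the forest polynomial but with upper bounds given by ρ instead of ρ_F — equals the forest polynomial β_F. -/

import Mathlib

/-- Plane binary trees. `leaf` is a leaf, `node l r` an internal node. -/
inductive BT where
  | leaf : BT
  | node : BT → BT → BT
deriving DecidableEq

/-- Number of internal nodes. -/
def BT.size : BT → ℕ
  | .leaf => 0
  | .node l r => l.size + r.size + 1

/-- Multiset of values `ρ_F(v)` (canonical label of the leftmost descendant,
reached by following left edges) over the internal nodes of a tree whose
inorder canonical labels start at `a`. -/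
def BT.rhoMS : BT → ℤ → Multiset ℤ
  | .leaf, _ => 0
  | .node l r, a => a ::ₘ (l.rhoMS a + r.rhoMS (a + l.size + 1))

/-- Multiset of canonical labels of internal nodes whose left child is a leaf
("left support"). -/
def BT.lsuppMS : BT → ℤ → Multiset ℤ
  | .leaf, _ => 0
  | .node l r, a =>
      (if l = BT.leaf then ({a} : Multiset ℤ) else 0) + l.lsuppMS a
        + r.lsuppMS (a + l.size + 1)

/-- The flagged generating polynomial of a binary tree with inorder labels
starting at `a`, where every label is at least `lo` (lower bound transmitted
from the parent), at most the `ρ`-value of the node, labels weakly increase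
down left edges and strictly increase down right edges. The variables are
`x_1, x_2, …` (the variable `X 0` is unused). -/
noncomputable def BT.polyAux : BT → ℤ → ℕ → MvPolynomial ℕ ℚ
  | .leaf, _, _ => 1
  | .node l r, a, lo =>
      ∑ k ∈ Finset.Icc lo a.toNat,
        MvPolynomial.X k * l.polyAux a k * r.polyAux (a + l.size + 1) (k + 1)

/-- The forest polynomial of a single indexed tree with support starting at `a`. -/
noncomputable def BT.poly (t : BT) (a : ℤ) : MvPolynomial ℕ ℚ := t.polyAux a 1

/-- An indexed forest: a list of binary trees together with the starting points
of their supports, the supports being maximal intervals (consecutive supports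
leave a gap of at least one integer). -/
structure IndexedForest where
  trees : List (ℤ × BT)
  nonempty : ∀ p ∈ trees, p.2 ≠ BT.leaf
  gaps : trees.Chain' (fun p q => p.1 + (p.2.size : ℤ) + 1 ≤ q.1)

/-- The support of an indexed forest, as a set of integers. -/
def IndexedForest.Supp (F : IndexedForest) : Set ℤ :=
  {i | ∃ p ∈ F.trees, p.1 ≤ i ∧ i < p.1 + (p.2.size : ℤ)}

/-- The multiset of `ρ_F`-values of all internal nodes of `F`. -/
def IndexedForest.rhoMS (F : IndexedForest) : Multiset ℤ :=
  (F.trees.map (fun p => p.2.rhoMS p.1)).sum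

/-- The `ℕ`-vector `c(F)`: `c_i` counts internal nodes with `ρ_F`-value `i`. -/
def cOf (F : IndexedForest) : ℤ → ℕ := fun i => F.rhoMS.count i

/-- The multiset of left-support labels of `F`. -/
def IndexedForest.lsuppMS (F : IndexedForest) : Multiset ℤ :=
  (F.trees.map (fun p => p.2.lsuppMS p.1)).sum

/-- Forest polynomial of a list of located trees. -/
noncomputable def polyL (ts : List (ℤ × BT)) : MvPolynomial ℕ ℚ :=
  (ts.map (fun p => p.2.poly p.1)).prod

/-- The forest polynomial of an indexed forest. -/
noncomputable def IndexedForest.poly (F : IndexedForest) : MvPolynomial ℕ ℚ :=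
  polyL F.trees

/-- Number of internal nodes of a forest. -/
def IndexedForest.size (F : IndexedForest) : ℕ :=
  (F.trees.map (fun p => p.2.size)).sum

/-- Generic labeled plane binary trees: internal nodes carry a label in `α`. -/
inductive GT (α : Type) where
  | leaf : GT α
  | node : α → GT α → GT α → GT α
deriving DecidableEq

/-- Underlying (unlabeled) shape. -/
def GT.shape {α : Type} : GT α → BT
  | .leaf => BT.leaf
  | .node _ l r => BT.node l.shape r.shape

/-- Number of internal nodes. -/
def GT.size {α : Type} : GT α → ℕ
  | .leaf => 0
  | .node _ l r => l.size + r.size + 1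

/-- Multiset of labels of internal nodes. -/
def GT.labels {α : Type} : GT α → Multiset α
  | .leaf => 0
  | .node k l r => k ::ₘ (l.labels + r.labels)

/-- Relabel a labeled tree. -/
def GT.map {α β : Type} (f : α → β) : GT α → GT β
  | .leaf => .leaf
  | .node k l r => .node (f k) (l.map f) (r.map f)

/-- The root label of a labeled tree (if any) is smaller than `k`. -/
def rootBelow (k : ℕ) : GT ℕ → Prop
  | .leaf => True
  | .node m _ _ => m < k

/-- A decreasing labeling: labels strictly decrease away from the root. -/
def IsDec : GT ℕ → Prop
  | .leaf => True
  | .node k l r => rootBelow k l ∧ rootBelow k r ∧ IsDec l ∧ IsDec r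

/-- Strict order on the alphabet `{i^{(j)}}`, encoded as pairs `(i, j)` ordered
lexicographically (`i^{(j)} < i'^{(j')}` iff `i < i'`, or `i = i'` and `j < j'`). -/
def lexLt (p q : ℤ × ℕ) : Prop := p.1 < q.1 ∨ (p.1 = q.1 ∧ p.2 < q.2)

/-- The root label of `T` (if any) is smaller than `c` in the alphabet order. -/
def rootLtA (c : ℤ × ℕ) : GT (ℤ × ℕ) → Prop
  | .leaf => True
  | .node k _ _ => lexLt k c

/-- The root label of `T` (if any) is larger than `c` in the alphabet order. -/
def rootGtA (c : ℤ × ℕ) : GT (ℤ × ℕ) → Prop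
  | .leaf => True
  | .node k _ _ => lexLt c k

/-- Local binary search labeling conditions for a labeled tree whose inorder
canonical labels start at `a`: each node label has value in the canonical-label
interval of its subtree, exceeds the label of its left child and is less than
the label of its right child. (Injectivity is imposed separately.) -/
def IsLBS : GT (ℤ × ℕ) → ℤ → Prop
  | .leaf, _ => True
  | .node k l r, a =>
      (a ≤ k.1 ∧ k.1 < a + ((l.size + r.size + 1 : ℕ) : ℤ)) ∧
      rootLtA k l ∧ rootGtA k r ∧ IsLBS l a ∧ IsLBS r (a + l.size + 1)

/-- Flagged generating polynomial of an LBS-labeled tree: labels `κ ≥ lo`,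
bounded above by the value of the node's LBS label, weakly increasing down left
edges and strictly increasing down right edges. -/
noncomputable def GT.zpolyAux : GT (ℤ × ℕ) → ℕ → MvPolynomial ℕ ℚ
  | .leaf, _ => 1
  | .node k l r, lo =>
      ∑ x ∈ Finset.Icc lo k.1.toNat,
        MvPolynomial.X x * l.zpolyAux x * r.zpolyAux (x + 1)

/-- The polynomial `β(F, ρ)` of an LBS-labeled tree. -/
noncomputable def GT.zpoly (P : GT (ℤ × ℕ)) : MvPolynomial ℕ ℚ := P.zpolyAux 1

/-!
At a node whose subtree carries the canonical labels `a, a+1, …`, the bound `ρ(v)` may exceed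
`ρ_F(v) = a`, but every term of the sum with `κ(v) > a` vanishes: if the left child is internal,
its own leftmost label is again `a` while it must carry a label `≥ κ(v)`; if the left child is a
leaf, the right subtree starts at `a + 1` and must carry labels `> κ(v) ≥ a + 1`; and if both
children are leaves, the interval condition on `ρ(v)` forces `ρ(v) = a`. So both polynomials
are the same sum, node by node.
-/

lemma GT.size_shape {α : Type} (P : GT α) : P.shape.size = P.size := by
  induction P with
  | leaf => rfl
  | node _ l r ihl ihr => simp only [GT.shape, GT.size, BT.size, ihl, ihr]

lemma BT.polyAux_node_of_toNat_lt (l r : BT) (a : ℤ) {lo : ℕ} (h : a.toNat < lo) :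
    (BT.node l r).polyAux a lo = 0 := by
  rw [BT.polyAux, Finset.Icc_eq_empty (by omega), Finset.sum_empty]

lemma BT.polyAux_summand_eq_zero (l r : BT) {a b : ℤ} {x : ℕ}
    (hb : b < a + (BT.node l r).size) (hax : a.toNat < x) (hxb : x ≤ b.toNat) :
    MvPolynomial.X x * l.polyAux a x * r.polyAux (a + l.size + 1) (x + 1) = 0 := by
  cases l with
  | node l₁ r₁ => rw [BT.polyAux_node_of_toNat_lt _ _ _ hax, mul_zero, zero_mul]
  | leaf =>
    cases r with
    | leaf => simp only [BT.size] at hb; omega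
    | node l₂ r₂ =>
      rw [BT.polyAux_node_of_toNat_lt _ _ _ (by simp only [BT.size]; omega), mul_zero]

lemma BT.sum_Icc_eq_polyAux_node (l r : BT) {a b : ℤ} (lo : ℕ) (hab : a ≤ b)
    (hb : b < a + (BT.node l r).size) :
    ∑ x ∈ Finset.Icc lo b.toNat,
        MvPolynomial.X x * l.polyAux a x * r.polyAux (a + l.size + 1) (x + 1) =
      (BT.node l r).polyAux a lo := by
  rw [BT.polyAux]
  symm
  apply Finset.sum_subset
  · intro x hx
    simp only [Finset.mem_Icc] at hx ⊢
    omega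
  · intro x hxb hxa
    simp only [Finset.mem_Icc] at hxb hxa
    exact BT.polyAux_summand_eq_zero l r hb (by omega) hxb.2

lemma GT.zpolyAux_eq_polyAux_shape (P : GT (ℤ × ℕ)) {a : ℤ} (lo : ℕ) (h : IsLBS P a) :
    P.zpolyAux lo = P.shape.polyAux a lo := by
  induction P generalizing a lo with
  | leaf => rfl
  | node k l r ihl ihr =>
    obtain ⟨⟨hak, hka⟩, -, -, hl, hr⟩ := h
    rw [GT.shape, ← BT.sum_Icc_eq_polyAux_node _ _ lo hak
      (by simpa only [BT.size, GT.size_shape] using hka), GT.zpolyAux, GT.size_shape]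
    exact Finset.sum_congr rfl fun x _ => by rw [ihl x hl, ihr (x + 1) hr]

lemma GT.prod_zpoly_eq_polyL {Ps : List (GT (ℤ × ℕ))} {ts : List (ℤ × BT)}
    (h : List.Forall₂
      (fun (P : GT (ℤ × ℕ)) (p : ℤ × BT) => P.shape = p.2 ∧ IsLBS P p.1) Ps ts) :
    (Ps.map GT.zpoly).prod = polyL ts := by
  induction h with
  | nil => rfl
  | cons hP _ ih =>
    rw [List.map_cons, List.prod_cons, ih, GT.zpoly, GT.zpolyAux_eq_polyAux_shape _ 1 hP.2, hP.1]
    rfl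

theorem lbs_poly_eq_forest_poly_general (F : IndexedForest) (Ps : List (GT (ℤ × ℕ)))
    (hmatch : List.Forall₂
      (fun (P : GT (ℤ × ℕ)) (p : ℤ × BT) => P.shape = p.2 ∧ IsLBS P p.1)
      Ps F.trees) :
    (Ps.map GT.zpoly).prod = F.poly :=
  GT.prod_zpoly_eq_polyL hmatch

/-- for any indexed forest `F` and any local binary search
labeling `ρ` of it (given tree by tree, with globally pairwise distinct
labels), the flagged polynomial `β(F, ρ)` equals the forest polynomial `β_F`. -/
theorem lbs_poly_eq_forest_poly (F : IndexedForest) (Ps : List (GT (ℤ × ℕ)))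
    (hmatch : List.Forall₂
      (fun (P : GT (ℤ × ℕ)) (p : ℤ × BT) => P.shape = p.2 ∧ IsLBS P p.1)
      Ps F.trees)
    (hinj : ((Ps.map GT.labels).sum : Multiset (ℤ × ℕ)).Nodup) :
    (Ps.map GT.zpoly).prod = F.poly :=
  lbs_poly_eq_forest_poly_general F Ps hmatch
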